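/- arXiv:1206.5473 — 2 statements merged into one kernel-verified Lean document; each statement's English description precedes it below -/
import Mathlib

section
/- Let H be a group that is not Cayley bounded, i.e. there exists a generating subset U ⊆ H such that for every n ∈ ℕ some element of H is not a product of n elements of U ∪ U⁻¹ ∪ {1}. Then for every infinite subgroup G ≤ H there exists a subgroup K with G ≤ K ≤ H, |K| = |G|, and K is not Cayley bounded. -/
open Pointwise

/-- A group is *not* Cayley bounded: there is a generating set `U` such that for
every `n`, some element is not a product of `n` elements of `U ∪ U⁻¹ ∪ {1}`. -/
def NotCayleyBounded (G : Type*) [Group G] : Prop :=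
  ∃ U : Set G, Subgroup.closure U = ⊤ ∧
    ∀ n : ℕ, ∃ g : G, g ∉ (U ∪ U⁻¹ ∪ {1}) ^ n

/-- Cardinality bound for the subgroup closure of a set. -/
lemma mk_subgroup_closure_le {H : Type*} [Group H] (S : Set H) :
    Cardinal.mk (Subgroup.closure S) ≤ max (Cardinal.mk S) Cardinal.aleph0 := by
  have hrep : ∀ x : Subgroup.closure S,
      ∃ l : List ↥(S ∪ S⁻¹), (l.map Subtype.val).prod = (x : H) := by
    intro x
    have hx : (x : H) ∈ Submonoid.closure (S ∪ S⁻¹) := by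
      rw [← Subgroup.closure_toSubmonoid]; exact x.2
    obtain ⟨l, hl, hprod⟩ := Submonoid.exists_list_of_mem_closure hx
    refine ⟨List.pmap Subtype.mk l hl, ?_⟩
    rw [List.map_pmap]
    simpa using hprod
  choose f hf using hrep
  have hinj : Function.Injective f := by
    intro a b hab
    apply Subtype.ext
    rw [← hf a, ← hf b, hab]
  have h1 : Cardinal.mk (Subgroup.closure S) ≤ Cardinal.mk (List ↥(S ∪ S⁻¹)) :=
    Cardinal.mk_le_of_injective hinj
  have h2 : Cardinal.mk (List ↥(S ∪ S⁻¹)) ≤ max Cardinal.aleph0 (Cardinal.mk ↥(S ∪ S⁻¹)) :=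
    Cardinal.mk_list_le_max _
  have h3 : Cardinal.mk ↥(S ∪ S⁻¹) ≤ max (Cardinal.mk S) Cardinal.aleph0 := by
    have hinv : Cardinal.mk ↥(S⁻¹) ≤ Cardinal.mk S := by
      refine Cardinal.mk_le_of_injective (f := fun x : ↥(S⁻¹) => (⟨x.1⁻¹, x.2⟩ : ↥S)) ?_
      intro a b hab
      exact Subtype.ext (inv_injective (congrArg Subtype.val hab))
    have := (Cardinal.mk_union_le S S⁻¹)
    refine this.trans ?_
    rcases le_or_gt Cardinal.aleph0 (Cardinal.mk S) with h | h
    · have : Cardinal.mk ↑S + Cardinal.mk ↑S⁻¹ ≤ Cardinal.mk S + Cardinal.mk S :=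
        add_le_add le_rfl hinv
      refine this.trans ?_
      rw [Cardinal.add_eq_self h]
      exact le_max_left _ _
    · have : Cardinal.mk ↑S + Cardinal.mk ↑S⁻¹ ≤ Cardinal.aleph0 + Cardinal.aleph0 :=
        add_le_add h.le (hinv.trans h.le)
      refine this.trans ?_
      rw [Cardinal.add_eq_self le_rfl]
      exact le_max_right _ _
  refine h1.trans (h2.trans ?_)
  exact max_le (le_max_right _ _) h3

/-- The class of groups which are not Cayley bounded is bountiful. -/
theorem not_cayley_bounded_bountiful {H : Type*} [Group H]
    (hH : NotCayleyBounded H) :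
    ∀ G : Subgroup H, Infinite G →
      ∃ K : Subgroup H, G ≤ K ∧ Cardinal.mk K = Cardinal.mk G ∧
        NotCayleyBounded K := by
  obtain ⟨U, hUgen, hUn⟩ := hH
  choose g hg using hUn
  have hrep : ∀ h : H, ∃ l : List H, (∀ y ∈ l, y ∈ U ∪ U⁻¹) ∧ l.prod = h := by
    intro h
    have : h ∈ Submonoid.closure (U ∪ U⁻¹) := by
      rw [← Subgroup.closure_toSubmonoid, hUgen]; trivial
    exact Submonoid.exists_list_of_mem_closure this
  choose w hw hwprod using hrep
  intro G hG
  classical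
  let T : ℕ → Set H := fun i => Nat.rec ((G : Set H) ∪ Set.range g)
      (fun _ Ti => Ti ∪ ⋃ h ∈ Ti, {x | x ∈ w h}) i
  let S := ⋃ i, T i
  let K := Subgroup.closure S
  have hGS : (G : Set H) ⊆ S :=
    (Set.subset_union_left).trans (Set.subset_iUnion T 0)
  have hGK : G ≤ K := fun x hx => Subgroup.subset_closure (hGS hx)
  have hgS : ∀ n, g n ∈ S := fun n => Set.subset_iUnion T 0 (Or.inr ⟨n, rfl⟩)
  have hSK : S ⊆ (K : Set H) := Subgroup.subset_closure
  have hlettersS : ∀ h ∈ S, ∀ x ∈ w h, x ∈ S := by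
    intro h hh x hx
    obtain ⟨i, hi⟩ := Set.mem_iUnion.mp hh
    refine Set.subset_iUnion T (i + 1) ?_
    exact Or.inr (Set.mem_biUnion hi hx)
  -- cardinality
  have hGinf : Cardinal.aleph0 ≤ Cardinal.mk G := Cardinal.aleph0_le_mk G
  have hGset : Cardinal.mk ↥(G : Set H) = Cardinal.mk G := rfl
  have hTcard : ∀ i, Cardinal.mk ↥(T i) ≤ Cardinal.mk G := by
    intro i
    induction i with
    | zero =>
      refine (Cardinal.mk_union_le _ _).trans ?_
      have h1 : Cardinal.mk ↥(Set.range g) ≤ Cardinal.aleph0 := by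
        rw [Cardinal.mk_le_aleph0_iff]
        exact (Set.countable_range g).to_subtype
      calc Cardinal.mk ↥(G : Set H) + Cardinal.mk ↥(Set.range g)
          ≤ Cardinal.mk G + Cardinal.aleph0 := add_le_add hGset.le h1
        _ = Cardinal.mk G := Cardinal.add_eq_left hGinf hGinf
    | succ i ih =>
      refine (Cardinal.mk_union_le _ _).trans ?_
      have h1 : Cardinal.mk ↥(⋃ h ∈ T i, {x | x ∈ w h}) ≤ Cardinal.mk G := by
        refine (Cardinal.mk_biUnion_le _ _).trans ?_
        have h2 : (⨆ x : T i, Cardinal.mk {y | y ∈ w x.1}) ≤ Cardinal.aleph0 := by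
          refine ciSup_le' fun x => ?_
          rw [Cardinal.mk_le_aleph0_iff]
          exact (List.finite_toSet (w x.1)).countable
        calc Cardinal.mk ↥(T i) * (⨆ x : T i, Cardinal.mk {y | y ∈ w x.1})
            ≤ Cardinal.mk G * Cardinal.aleph0 := mul_le_mul' ih h2
          _ ≤ Cardinal.mk G * Cardinal.mk G := mul_le_mul' le_rfl hGinf
          _ = Cardinal.mk G := Cardinal.mul_eq_self hGinf
      calc Cardinal.mk ↥(T i) + Cardinal.mk ↥(⋃ h ∈ T i, {x | x ∈ w h})
          ≤ Cardinal.mk G + Cardinal.mk G := add_le_add ih h1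
        _ = Cardinal.mk G := Cardinal.add_eq_self hGinf
  have hScard : Cardinal.mk S ≤ Cardinal.mk G := by
    have := Cardinal.mk_iUnion_le_lift (f := T)
    have hsup : (⨆ i : ℕ, Cardinal.lift.{0} (Cardinal.mk ↥(T i))) ≤ Cardinal.mk G := by
      refine ciSup_le' fun i => ?_
      rw [Cardinal.lift_uzero]
      exact hTcard i
    calc Cardinal.mk S = Cardinal.lift.{0} (Cardinal.mk ↥(⋃ i, T i)) := by
          rw [Cardinal.lift_uzero]
      _ ≤ Cardinal.lift.{u_1} (Cardinal.mk ℕ) * ⨆ i : ℕ, Cardinal.lift.{0} (Cardinal.mk ↥(T i)) :=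
          this
      _ ≤ Cardinal.aleph0 * Cardinal.mk G := by
          refine mul_le_mul' ?_ hsup
          simp
      _ ≤ Cardinal.mk G * Cardinal.mk G := mul_le_mul' hGinf le_rfl
      _ = Cardinal.mk G := Cardinal.mul_eq_self hGinf
  have hKcard : Cardinal.mk K = Cardinal.mk G := by
    refine le_antisymm ?_ ?_
    · exact (mk_subgroup_closure_le S).trans (max_le hScard hGinf)
    · exact Cardinal.mk_le_of_injective (Subgroup.inclusion_injective hGK)
  refine ⟨K, hGK, hKcard, ?_⟩
  -- the generating set of K
  refine ⟨Subtype.val ⁻¹' (U ∪ U⁻¹), ?_, ?_⟩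
  · -- generates
    set W : Set K := Subtype.val ⁻¹' (U ∪ U⁻¹) with hWdef
    rw [Subgroup.eq_top_iff']
    intro k
    have hC : Subgroup.closure S ≤ (Subgroup.closure W).map K.subtype := by
      rw [Subgroup.closure_le]
      intro h hh
      have : h = (w h).prod := (hwprod h).symm
      rw [SetLike.mem_coe, this]
      refine Subgroup.list_prod_mem _ fun x hx => ?_
      have hxS : x ∈ S := hlettersS h hh x hx
      have hxU : x ∈ U ∪ U⁻¹ := hw h x hx
      exact ⟨⟨x, hSK hxS⟩, Subgroup.subset_closure hxU, rfl⟩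
    have hk : (k : H) ∈ (Subgroup.closure W).map K.subtype := hC k.2
    obtain ⟨y, hy, hyk⟩ := hk
    have : y = k := Subtype.ext hyk
    rwa [← this]
  · -- unbounded
    intro n
    set W : Set K := Subtype.val ⁻¹' (U ∪ U⁻¹) with hWdef
    refine ⟨⟨g n, hSK (hgS n)⟩, fun hmem => hg n ?_⟩
    have himg : K.subtype ⟨g n, hSK (hgS n)⟩ ∈ ⇑K.subtype '' ((W ∪ W⁻¹ ∪ {1}) ^ n : Set K) :=
      ⟨_, hmem, rfl⟩
    rw [Set.image_pow K.subtype] at himg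
    have hsub : (K.subtype : K → H) '' (W ∪ W⁻¹ ∪ {1}) ⊆ U ∪ U⁻¹ ∪ {1} := by
      rintro _ ⟨x, hx, rfl⟩
      rcases hx with (hx | hx) | hx
      · exact Or.inl hx
      · have : (x⁻¹ : K) ∈ W := hx
        have h2 : ((x : H))⁻¹ ∈ U ∪ U⁻¹ := this
        rcases h2 with h2 | h2
        · exact Or.inl (Or.inr (by simpa [Set.mem_inv] using h2))
        · exact Or.inl (Or.inl (by simpa [Set.mem_inv] using h2))
      · simp only [Set.mem_singleton_iff] at hx
        subst hx
        exact Or.inr (by simp)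
    exact Set.pow_subset_pow_left hsub himg
end

section
/- Let H be an infinite group satisfying at least one of the following three properties: (a) H is the union of a strictly increasing sequence of proper subgroups; (b) H splits as a non-trivial free product with amalgamation; (c) H admits a surjective homomorphism onto ℤ. Then for every infinite subgroup G ≤ H there exists a subgroup K with G ≤ K ≤ H, |K| = |G|, and K satisfies at least one of the properties (a), (b), (c). (By Serre's theorem, a group lacks property FA — i.e. admits an action on a simplicial tree without a fixed point — exactly when it satisfies (a), (b) or (c); thus this states that the class of groups without property FA is bountiful.) -/
/-- (a) The group is the union of a strictly increasing sequence of proper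
subgroups, i.e. has cofinality `≤ ω`. -/
def CofinalityLeOmega (G : Type*) [Group G] : Prop :=
  ∃ Hn : ℕ → Subgroup G, StrictMono Hn ∧ (∀ n, Hn n ≠ ⊤) ∧
    ∀ x : G, ∃ n, x ∈ Hn n

/-- (b) The group splits as a non-trivial free product with amalgamation. -/
def SplitsAsNontrivialAmalgam (G : Type*) [Group G] : Prop :=
  ∃ A B : Subgroup G,
    A ⊓ B ≠ A ∧ A ⊓ B ≠ B ∧
    Subgroup.closure ((A : Set G) ∪ (B : Set G)) = ⊤ ∧
    ∀ w : List G, w ≠ [] →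
      (∀ x ∈ w, (x ∈ A ∧ x ∉ B) ∨ (x ∈ B ∧ x ∉ A)) →
      w.Chain' (fun x y => ¬(x ∈ A ∧ y ∈ A) ∧ ¬(x ∈ B ∧ y ∈ B)) →
      w.prod ≠ 1

/-- (c) The group admits a surjective homomorphism onto `ℤ`. -/
def SurjectsOntoZ (G : Type*) [Group G] : Prop :=
  ∃ f : G →* Multiplicative ℤ, Function.Surjective f

/-!
Each of (a), (b), (c) is witnessed by a small amount of data in `H`: a sequence of elements
`xₙ ∉ Hₙ`, a generator `t` mapping to `1 ∈ ℤ`, or two elements `a ∈ A ∖ B`, `b ∈ B ∖ A` together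
with, for each `g ∈ G`, the finitely many letters of `A ∪ B` needed to spell `g`. The subgroup `K`
generated by `G` and this data has the cardinality of `G`, and the property passes to `K` by
intersecting the witnessing structure of `H` with `K`: a strictly increasing subsequence of the
chain `Hₙ ∩ K`, the restriction of the surjection to `ℤ`, and the pair `A ∩ K`, `B ∩ K`, which
inherits the normal form because `K` is generated by elements of `A ∪ B`.
-/

open Cardinal Set Subgroup

theorem Cardinal.mk_union_le_of_countable {α : Type*} {s X : Set α} {c : Cardinal}
    (hc : ℵ₀ ≤ c) (hs : #s ≤ c) (hX : X.Countable) : #(s ∪ X : Set α) ≤ c :=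
  (mk_union_le s X).trans (add_le_of_le hc hs (hX.le_aleph0.trans hc))

namespace Subgroup

variable {H : Type*} [Group H]

theorem cardinalMk_closure_le_max (s : Set H) : #(closure s) ≤ max #s ℵ₀ := by
  classical
  rw [FreeGroup.closure_eq_range]
  calc #(FreeGroup.lift ((↑) : s → H)).range
      ≤ #(FreeGroup s) := mk_le_of_surjective (MonoidHom.rangeRestrict_surjective _)
    _ ≤ #(List (s × Bool)) := mk_le_of_injective FreeGroup.toWord_injective
    _ ≤ max ℵ₀ #(s × Bool) := mk_list_le_max _
    _ ≤ max #s ℵ₀ := by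
      refine max_le (le_max_right _ _) ?_
      calc #(s × Bool) = #s * 2 := by simp
        _ ≤ max (max #s 2) ℵ₀ := mul_le_max _ _
        _ = max #s ℵ₀ := by rw [max_assoc, max_eq_right ofNat_le_aleph0]

theorem cardinalMk_closure_eq_of_le {G : Subgroup H} [Infinite G] {s : Set H}
    (hG : G ≤ closure s) (hs : #s ≤ #G) : #(closure s) = #G :=
  le_antisymm ((cardinalMk_closure_le_max s).trans (max_le hs (aleph0_le_mk G)))
    (mk_le_mk_of_subset hG)

theorem cardinalMk_closure_union_countable {G : Subgroup H} [Infinite G] {X : Set H}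
    (hX : X.Countable) : #(closure ((G : Set H) ∪ X)) = #G :=
  cardinalMk_closure_eq_of_le (fun _ hg => subset_closure (Or.inl hg))
    (mk_union_le_of_countable (aleph0_le_mk G) le_rfl hX)

theorem exists_finite_subset_of_mem_closure {s : Set H} {x : H} (hx : x ∈ closure s) :
    ∃ t ⊆ s, t.Finite ∧ x ∈ closure t := by
  induction hx using closure_induction with
  | mem x hx => exact ⟨{x}, singleton_subset_iff.mpr hx, finite_singleton x, subset_closure rfl⟩
  | one => exact ⟨∅, empty_subset s, finite_empty, one_mem _⟩
  | mul x y _ _ hx hy =>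
    obtain ⟨t, hts, ht, hxt⟩ := hx
    obtain ⟨u, hus, hu, hyu⟩ := hy
    exact ⟨t ∪ u, union_subset hts hus, ht.union hu,
      mul_mem (closure_mono subset_union_left hxt) (closure_mono subset_union_right hyu)⟩
  | inv x _ hx =>
    obtain ⟨t, hts, ht, hxt⟩ := hx
    exact ⟨t, hts, ht, inv_mem hxt⟩

theorem exists_subset_le_closure_cardinalMk_le {s : Set H} {G : Subgroup H} [Infinite G]
    (hG : G ≤ closure s) : ∃ t ⊆ s, G ≤ closure t ∧ #t ≤ #G := by
  choose t hts ht hgt using fun g : G => exists_finite_subset_of_mem_closure (hG g.2)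
  refine ⟨⋃ g, t g, iUnion_subset hts,
    fun g hg => closure_mono (subset_iUnion t ⟨g, hg⟩) (hgt ⟨g, hg⟩), ?_⟩
  calc #(⋃ g, t g) ≤ #G * ⨆ g, #(t g) := mk_iUnion_le _
    _ ≤ #G * ℵ₀ := by gcongr; exact ciSup_le' fun g => (ht g).countable.le_aleph0
    _ = #G := mul_aleph0_eq (aleph0_le_mk _)

end Subgroup

theorem CofinalityLeOmega.of_monotone {G : Type*} [Group G] {L : ℕ → Subgroup G}
    (hL : Monotone L) (hne : ∀ n, L n ≠ ⊤) (hcov : ∀ x, ∃ n, x ∈ L n) : CofinalityLeOmega G := by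
  have hjump : ∀ n, ∃ m, n < m ∧ L n < L m := by
    intro n
    obtain ⟨x, hx⟩ := SetLike.exists_not_mem_of_ne_top _ (hne n)
    obtain ⟨m, hm⟩ := hcov x
    have hnm : n < m := lt_of_not_ge fun h => hx (hL h hm)
    exact ⟨m, hnm, lt_of_le_not_ge (hL hnm.le) fun h => hx (h hm)⟩
  choose next hlt hLlt using hjump
  have hφ : StrictMono fun k => next^[k] 0 :=
    strictMono_nat_of_lt_succ fun k => by simpa only [Function.iterate_succ_apply'] using hlt _
  refine ⟨fun k => L (next^[k] 0), strictMono_nat_of_lt_succ fun k => ?_, fun k => hne _,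
    fun x => ?_⟩
  · simpa only [Function.iterate_succ_apply'] using hLlt _
  · obtain ⟨n, hn⟩ := hcov x
    exact ⟨n, hL (hφ.le_apply) hn⟩

section

variable {H : Type*} [Group H]

theorem CofinalityLeOmega.of_not_le {L : ℕ → Subgroup H} (hL : Monotone L)
    (hcov : ∀ x, ∃ n, x ∈ L n) {K : Subgroup H} (hK : ∀ n, ¬K ≤ L n) : CofinalityLeOmega K :=
  .of_monotone (L := fun n => (L n).subgroupOf K) (fun _ _ h => comap_mono (hL h))
    (fun n h => hK n (subgroupOf_eq_top.mp h)) (fun x => hcov x)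

theorem CofinalityLeOmega.exists_le_cardinalMk_eq (hH : CofinalityLeOmega H)
    (G : Subgroup H) [Infinite G] :
    ∃ K : Subgroup H, G ≤ K ∧ #K = #G ∧ CofinalityLeOmega K := by
  obtain ⟨L, hL, hne, hcov⟩ := hH
  choose x hx using fun n => SetLike.exists_not_mem_of_ne_top _ (hne n)
  refine ⟨closure ((G : Set H) ∪ range x), fun g hg => subset_closure (Or.inl hg),
    cardinalMk_closure_union_countable (countable_range x),
    .of_not_le hL.monotone hcov fun n hK => hx n (hK (subset_closure (Or.inr ⟨n, rfl⟩)))⟩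

theorem SurjectsOntoZ.of_mem (f : H →* Multiplicative ℤ) {K : Subgroup H} {t : H} (ht : t ∈ K)
    (hft : f t = .ofAdd 1) : SurjectsOntoZ K :=
  ⟨f.comp K.subtype, fun z => ⟨⟨t ^ z.toAdd, zpow_mem ht _⟩, by simp [hft, ← ofAdd_zsmul]⟩⟩

theorem SurjectsOntoZ.exists_le_cardinalMk_eq (hH : SurjectsOntoZ H)
    (G : Subgroup H) [Infinite G] :
    ∃ K : Subgroup H, G ≤ K ∧ #K = #G ∧ SurjectsOntoZ K := by
  obtain ⟨f, hf⟩ := hH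
  obtain ⟨t, ht⟩ := hf (.ofAdd 1)
  refine ⟨closure ((G : Set H) ∪ {t}), fun g hg => subset_closure (Or.inl hg),
    cardinalMk_closure_union_countable (countable_singleton t),
    .of_mem f (subset_closure (Or.inr rfl)) ht⟩

def ReducedWordsNeOne (A B : Subgroup H) : Prop :=
  ∀ w : List H, w ≠ [] →
    (∀ x ∈ w, (x ∈ A ∧ x ∉ B) ∨ (x ∈ B ∧ x ∉ A)) →
    w.IsChain (fun x y => ¬(x ∈ A ∧ y ∈ A) ∧ ¬(x ∈ B ∧ y ∈ B)) →
    w.prod ≠ 1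

theorem splitsAsNontrivialAmalgam_iff :
    SplitsAsNontrivialAmalgam H ↔ ∃ A B : Subgroup H, ¬A ≤ B ∧ ¬B ≤ A ∧
      closure ((A : Set H) ∪ B) = ⊤ ∧ ReducedWordsNeOne A B := by
  simp only [SplitsAsNontrivialAmalgam, ne_eq, inf_eq_left, inf_eq_right]
  rfl

theorem ReducedWordsNeOne.subgroupOf {A B : Subgroup H} (hAB : ReducedWordsNeOne A B)
    (K : Subgroup H) : ReducedWordsNeOne (A.subgroupOf K) (B.subgroupOf K) :=
  fun w hw hmem hchain hprod => hAB (w.map K.subtype) (mt List.map_eq_nil_iff.mp hw)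
    (fun _ hx => by obtain ⟨y, hy, rfl⟩ := List.mem_map.mp hx; exact hmem y hy)
    ((List.isChain_map _).mpr hchain)
    (by rw [← map_list_prod, hprod, map_one])

theorem splitsAsNontrivialAmalgam_closure {A B : Subgroup H} (hAB : ReducedWordsNeOne A B)
    {s : Set H} (hs : s ⊆ A ∪ B) {a b : H} (ha : a ∈ s) (haB : a ∉ B) (hb : b ∈ s)
    (hbA : b ∉ A) : SplitsAsNontrivialAmalgam (closure s) := by
  refine splitsAsNontrivialAmalgam_iff.mpr
    ⟨A.subgroupOf _, B.subgroupOf _, ?_, ?_, ?_, hAB.subgroupOf _⟩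
  · exact SetLike.not_le_iff_exists.mpr
      ⟨⟨a, subset_closure ha⟩, (hs ha).resolve_right haB, haB⟩
  · exact SetLike.not_le_iff_exists.mpr
      ⟨⟨b, subset_closure hb⟩, (hs hb).resolve_left hbA, hbA⟩
  · rw [eq_top_iff, ← closure_closure_coe_preimage (k := s)]
    exact closure_mono fun x hx => hs hx

theorem SplitsAsNontrivialAmalgam.exists_le_cardinalMk_eq (hH : SplitsAsNontrivialAmalgam H)
    (G : Subgroup H) [Infinite G] :
    ∃ K : Subgroup H, G ≤ K ∧ #K = #G ∧ SplitsAsNontrivialAmalgam K := by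
  obtain ⟨A, B, hAB, hBA, htop, hwords⟩ := splitsAsNontrivialAmalgam_iff.mp hH
  obtain ⟨a, haA, haB⟩ := SetLike.not_le_iff_exists.mp hAB
  obtain ⟨b, hbB, hbA⟩ := SetLike.not_le_iff_exists.mp hBA
  obtain ⟨t, htAB, hGt, htG⟩ := exists_subset_le_closure_cardinalMk_le (G := G) (htop ▸ le_top)
  refine ⟨closure (t ∪ {a, b}), hGt.trans (closure_mono subset_union_left),
    cardinalMk_closure_eq_of_le (hGt.trans (closure_mono subset_union_left))
      (mk_union_le_of_countable (aleph0_le_mk G) htG ((countable_singleton b).insert a)),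
    splitsAsNontrivialAmalgam_closure hwords
      (union_subset htAB (insert_subset (Or.inl haA) (singleton_subset_iff.mpr (Or.inr hbB))))
      (Or.inr (mem_insert a _)) haB (Or.inr (mem_insert_of_mem a rfl)) hbA⟩

end

theorem not_FA_bountiful_general {H : Type*} [Group H]
    (hH : CofinalityLeOmega H ∨ SplitsAsNontrivialAmalgam H ∨ SurjectsOntoZ H) :
    ∀ G : Subgroup H, Infinite G →
      ∃ K : Subgroup H, G ≤ K ∧ Cardinal.mk K = Cardinal.mk G ∧
        (CofinalityLeOmega K ∨ SplitsAsNontrivialAmalgam K ∨ SurjectsOntoZ K) := by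
  intro G _
  rcases hH with h | h | h
  · obtain ⟨K, hGK, hcard, hK⟩ := h.exists_le_cardinalMk_eq G
    exact ⟨K, hGK, hcard, .inl hK⟩
  · obtain ⟨K, hGK, hcard, hK⟩ := h.exists_le_cardinalMk_eq G
    exact ⟨K, hGK, hcard, .inr (.inl hK)⟩
  · obtain ⟨K, hGK, hcard, hK⟩ := h.exists_le_cardinalMk_eq G
    exact ⟨K, hGK, hcard, .inr (.inr hK)⟩

/-- The class of groups without property FA (characterized by Serre's theorem
as those satisfying (a), (b) or (c)) is bountiful. -/
theorem not_FA_bountiful {H : Type*} [Group H] [Infinite H]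
    (hH : CofinalityLeOmega H ∨ SplitsAsNontrivialAmalgam H ∨ SurjectsOntoZ H) :
    ∀ G : Subgroup H, Infinite G →
      ∃ K : Subgroup H, G ≤ K ∧ Cardinal.mk K = Cardinal.mk G ∧
        (CofinalityLeOmega K ∨ SplitsAsNontrivialAmalgam K ∨ SurjectsOntoZ K) :=
  not_FA_bountiful_general hH
end
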